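/- arXiv:2305.09232 — 4 statements merged into one kernel-verified Lean document; each statement's English description precedes it below -/
import Mathlib

section
/- Let (B, L, θ) be a Boolean dynamical system and let A ∈ B. Then S(H(A)) := {B ∈ B : there is n ∈ ℕ₀ such that θ_β(B) ∈ H(A) for all β ∈ L^n, and θ_γ(B) ∈ H(A) ⊕ B_reg for all γ ∈ L^* with |γ| < n} is a saturated hereditary ideal of B containing A. -/
namespace BoolDyn

variable {X L : Type*}

section Defs

variable [GeneralizedBooleanAlgebra X]

/-- A map `X → X` is an action on the generalized Boolean algebra `X` if it preserves
`⊥`, `⊔`, `⊓` and `\`. -/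
def IsBoolAction (f : X → X) : Prop :=
  f ⊥ = ⊥ ∧ (∀ a b : X, f (a ⊔ b) = f a ⊔ f b) ∧ (∀ a b : X, f (a ⊓ b) = f a ⊓ f b) ∧
    ∀ a b : X, f (a \ b) = f a \ f b

/-- `θ_β := θ_{β_n} ∘ ⋯ ∘ θ_{β_1}` for a word `β = β_1 ⋯ β_n ∈ L^*`, with `θ_∅ = id`. -/
def thetaWord (θ : L → X → X) (β : List L) (a : X) : X :=
  β.foldl (fun x α => θ α x) a

/-- `Δ_a := {α ∈ L : θ_α(a) ≠ ∅}`. -/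
def Delta (θ : L → X → X) (a : X) : Set L := {α : L | θ α a ≠ ⊥}

/-- `a` is regular if `0 < |Δ_b| < ∞` for every nonempty `b ⊆ a`. -/
def IsRegularElem (θ : L → X → X) (a : X) : Prop :=
  ∀ b : X, b ≤ a → b ≠ ⊥ → (Delta θ b).Finite ∧ (Delta θ b).Nonempty

/-- `B_reg`, the set of regular elements. -/
def regSet (θ : L → X → X) : Set X := {a : X | IsRegularElem θ a}

/-- An ideal of a generalized Boolean algebra: a nonempty subset closed under `⊔` and
downward closed under `≤`. -/
structure IsIdeal (I : Set X) : Prop where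
  nonempty : I.Nonempty
  sup_mem : ∀ ⦃a b : X⦄, a ∈ I → b ∈ I → a ⊔ b ∈ I
  lower : ∀ ⦃a b : X⦄, a ∈ I → b ≤ a → b ∈ I

/-- A hereditary subset: closed under all the actions. -/
def Hereditary (θ : L → X → X) (H : Set X) : Prop := ∀ a ∈ H, ∀ α : L, θ α a ∈ H

/-- Saturated: `a ∈ H` whenever `a` is regular and `θ_α(a) ∈ H` for every `α ∈ Δ_a`. -/
def Saturated (θ : L → X → X) (H : Set X) : Prop :=
  ∀ a : X, IsRegularElem θ a → (∀ α ∈ Delta θ a, θ α a ∈ H) → a ∈ H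

/-- `J`-saturated: `a ∈ H` whenever `a ∈ J` and `θ_α(a) ∈ H` for every `α ∈ Δ_a`. -/
def JSaturated (θ : L → X → X) (J H : Set X) : Prop :=
  ∀ a ∈ J, (∀ α ∈ Delta θ a, θ α a ∈ H) → a ∈ H

/-- A cycle: `β` nonempty, `a ≠ ∅`, and `θ_β(b) = b` for every `b ⊆ a`. -/
def IsCycle (θ : L → X → X) (β : List L) (a : X) : Prop :=
  β ≠ [] ∧ a ≠ ⊥ ∧ ∀ b : X, b ≤ a → thetaWord θ β b = b

/-- `(β, a)` has no exits: for every `t ∈ {1,…,n}` and every nonempty `b ⊆ θ_{β_{1,t}}(a)`,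
`b` is regular and `Δ_b = {β_{t+1}}` (with `β_{n+1} := β_1`). -/
def NoExits (θ : L → X → X) (β : List L) (a : X) : Prop :=
  ∀ t : ℕ, 1 ≤ t → t ≤ β.length →
    ∀ b : X, b ≤ thetaWord θ (β.take t) a → b ≠ ⊥ →
      IsRegularElem θ b ∧ Delta θ b = {α : L | β[t % β.length]? = some α}

/-- Condition (L): there is no cycle with no exits. -/
def CondL (θ : L → X → X) : Prop :=
  ¬ ∃ (β : List L) (a : X), IsCycle θ β a ∧ NoExits θ β a

/-- A filter of a generalized Boolean algebra. -/
structure IsBoolFilter (F : Set X) : Prop where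
  nonempty : F.Nonempty
  bot_not_mem : ⊥ ∉ F
  inf_mem : ∀ ⦃a b : X⦄, a ∈ F → b ∈ F → a ⊓ b ∈ F
  upper : ∀ ⦃a b : X⦄, a ∈ F → a ≤ b → b ∈ F

/-- An ultrafilter: a maximal filter. -/
def IsUltra (F : Set X) : Prop :=
  IsBoolFilter F ∧ ∀ G : Set X, IsBoolFilter G → F ⊆ G → G = F

/-- A filter of the ideal `I`, viewed as a generalized Boolean algebra in its own right. -/
structure IsFilterOn (I F : Set X) : Prop where
  subset : F ⊆ I
  nonempty : F.Nonempty
  bot_not_mem : ⊥ ∉ F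
  inf_mem : ∀ ⦃a b : X⦄, a ∈ F → b ∈ F → a ⊓ b ∈ F
  upper : ∀ a b : X, a ∈ F → b ∈ I → a ≤ b → b ∈ F

/-- An ultrafilter of the ideal `I`: a maximal filter of `I`. -/
def IsUltraOn (I F : Set X) : Prop :=
  IsFilterOn I F ∧ ∀ G : Set X, IsFilterOn I G → F ⊆ G → G = F

/-- `R_α := {a ∈ B : a ≤ θ_α(c) for some c ∈ B}`. -/
def Rset (θ : L → X → X) (α : L) : Set X := {a : X | ∃ c : X, a ≤ θ α c}

/-- `β^k`, the `k`-fold concatenation of the word `β`. -/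
def wordPow (β : List L) : ℕ → List L
  | 0 => []
  | k + 1 => β ++ wordPow β k

/-- An ultrafilter cycle. -/
def UltrafilterCycle (θ : L → X → X) (β : List L) (η : Set X) : Prop :=
  β ≠ [] ∧ IsUltra η ∧ ∀ a ∈ η, thetaWord θ β a ∈ η

/-- A maximal tail. -/
structure MaximalTail (θ : L → X → X) (T : Set X) : Prop where
  nonempty : T.Nonempty
  not_bot_mem : ⊥ ∉ T
  t2 : ∀ (a : X) (α : L), θ α a ∈ T → a ∈ T
  t3 : ∀ a b : X, a ⊔ b ∈ T → a ∈ T ∨ b ∈ T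
  t4 : ∀ a b : X, a ∈ T → a ≤ b → b ∈ T
  t5 : ∀ a : X, a ∈ T → IsRegularElem θ a → ∃ α : L, θ α a ∈ T
  t6 : ∀ a b : X, a ∈ T → b ∈ T →
    ∃ β γ : List L, thetaWord θ β a ⊓ thetaWord θ γ b ∈ T

/-- A cyclic (maximal) tail. -/
def CyclicTail (θ : L → X → X) (T : Set X) : Prop :=
  ∃ (β : List L) (η : Set X), UltrafilterCycle θ β η ∧
    T = {b : X | ∃ γ : List L, thetaWord θ γ b ∈ η} ∧
    ∃ A ∈ η, ∀ γ : List L, γ ≠ [] → ∀ b : X, b ≤ A → thetaWord θ γ b ∈ η →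
      b ∈ η ∧ ∃ k : ℕ, 0 < k ∧ γ = wordPow β k

/-- Condition (K). -/
def CondK (θ : L → X → X) : Prop :=
  ¬ ∃ (β : List L) (η : Set X) (A : X), UltrafilterCycle θ β η ∧ A ∈ η ∧
    ∀ γ : List L, γ ≠ [] → ∀ b : X, b ≤ A → thetaWord θ γ b ∈ η →
      b ∈ η ∧ ∃ k : ℕ, 0 < k ∧ γ = wordPow β k

/-- `H(A) = {b : b ≤ ⋃_{β ∈ F} θ_β(A) for some finite F ⊆ L^*}`. -/
def HA (θ : L → X → X) (A : X) : Set X :=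
  {b : X | ∃ F : Finset (List L), b ≤ F.sup fun β => thetaWord θ β A}

/-- `I₁ ⊕ I₂`, the smallest ideal containing the ideals `I₁` and `I₂`. -/
def oplus (I₁ I₂ : Set X) : Set X := {c : X | ∃ a ∈ I₁, ∃ b ∈ I₂, c = a ⊔ b}

/-- `S(H(A))`. -/
def SHA (θ : L → X → X) (A : X) : Set X :=
  {b : X | ∃ n : ℕ, (∀ β : List L, β.length = n → thetaWord θ β b ∈ HA θ A) ∧
    ∀ γ : List L, γ.length < n → thetaWord θ γ b ∈ oplus (HA θ A) (regSet θ)}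

/-- Minimality: `{∅}` and `B` are the only saturated hereditary ideals. -/
def Minimal (θ : L → X → X) : Prop :=
  ∀ H : Set X, IsIdeal H → Hereditary θ H → Saturated θ H → H = {⊥} ∨ H = Set.univ

end Defs

end BoolDyn

open BoolDyn

/-!
For a hereditary ideal `H`, let `S_n(H)` be the set of `b` with `θ_β(b) ∈ H` for `|β| = n` and
`θ_γ(b) ∈ H ⊕ B_reg` for `|γ| < n`, so that `S(H) = ⋃ₙ S_n(H)`. Peeling off the first letter gives
`S_0(H) = H` and `S_{n+1}(H) = (H ⊕ B_reg) ∩ {b : θ_α(b) ∈ S_n(H) for all α}`. By induction every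
`S_n(H)` is an ideal and the chain is increasing, so `S(H)` is an ideal; it is hereditary because
`θ_α` maps `S_{n+1}(H)` into `S_n(H)`; and it is saturated because a regular `a` has only finitely
many `α` with `θ_α(a) ≠ ∅`, so all the `θ_α(a)` lie in one `S_N(H)`, whence `a ∈ S_{N+1}(H)`.
-/

namespace BoolDyn

variable {X L : Type*} {θ : L → X → X}

theorem thetaWord_concat (β : List L) (α : L) (a : X) :
    thetaWord θ (β ++ [α]) a = θ α (thetaWord θ β a) :=
  List.foldl_concat ..

variable [GeneralizedBooleanAlgebra X]

namespace IsBoolAction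

variable {f : X → X}

theorem map_bot (hf : IsBoolAction f) : f ⊥ = ⊥ := hf.1

theorem map_sup (hf : IsBoolAction f) (a b : X) : f (a ⊔ b) = f a ⊔ f b := hf.2.1 a b

theorem monotone (hf : IsBoolAction f) : Monotone f := fun a b h => by
  have hb := hf.map_sup a b
  rw [sup_eq_right.mpr h] at hb
  exact le_sup_left.trans_eq hb.symm

end IsBoolAction

theorem delta_bot (hθ : ∀ α : L, IsBoolAction (θ α)) : Delta θ (⊥ : X) = ∅ :=
  Set.eq_empty_of_forall_notMem fun α hα => hα (hθ α).map_bot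

theorem delta_sup (hθ : ∀ α : L, IsBoolAction (θ α)) (a b : X) :
    Delta θ (a ⊔ b) = Delta θ a ∪ Delta θ b := by
  ext α
  simp only [Delta, Set.mem_ofPred_eq, Set.mem_union, (hθ α).map_sup, ne_eq, sup_eq_bot_iff,
    not_and_or]

theorem IsRegularElem.finite_delta (hθ : ∀ α : L, IsBoolAction (θ α)) {a : X}
    (ha : IsRegularElem θ a) : (Delta θ a).Finite := by
  rcases eq_or_ne a ⊥ with rfl | hne
  · rw [delta_bot hθ]
    exact Set.finite_empty
  · exact (ha a le_rfl hne).1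

namespace IsIdeal

variable {I J : Set X}

theorem bot_mem (hI : IsIdeal I) : ⊥ ∈ I :=
  let ⟨_, ha⟩ := hI.nonempty
  hI.lower ha bot_le

theorem oplus (hI : IsIdeal I) (hJ : IsIdeal J) : IsIdeal (oplus I J) where
  nonempty := ⟨⊥, ⊥, hI.bot_mem, ⊥, hJ.bot_mem, bot_sup_eq ⊥ |>.symm⟩
  sup_mem := by
    rintro _ _ ⟨a, ha, b, hb, rfl⟩ ⟨a', ha', b', hb', rfl⟩
    exact ⟨a ⊔ a', hI.sup_mem ha ha', b ⊔ b', hJ.sup_mem hb hb', sup_sup_sup_comm a b a' b'⟩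
  lower := by
    rintro _ c ⟨a, ha, b, hb, rfl⟩ hc
    refine ⟨c ⊓ a, hI.lower ha inf_le_right, c ⊓ b, hJ.lower hb inf_le_right, ?_⟩
    rw [← inf_sup_left, inf_eq_left.mpr hc]

theorem inter_setOf_forall_map_mem (hθ : ∀ α : L, IsBoolAction (θ α)) (hI : IsIdeal I)
    (hJ : IsIdeal J) : IsIdeal (J ∩ {b | ∀ α, θ α b ∈ I}) where
  nonempty := ⟨⊥, hJ.bot_mem, fun α => by rw [(hθ α).map_bot]; exact hI.bot_mem⟩
  sup_mem := fun _ _ ha hb =>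
    ⟨hJ.sup_mem ha.1 hb.1, fun α => (hθ α).map_sup .. ▸ hI.sup_mem (ha.2 α) (hb.2 α)⟩
  lower := fun _ _ ha h =>
    ⟨hJ.lower ha.1 h, fun α => hI.lower (ha.2 α) ((hθ α).monotone h)⟩

theorem setOf_exists_of_monotone {I : ℕ → Set X} (hI : ∀ n, IsIdeal (I n)) (hmono : Monotone I) :
    IsIdeal {b | ∃ n, b ∈ I n} where
  nonempty := ⟨⊥, 0, (hI 0).bot_mem⟩
  sup_mem := by
    rintro a b ⟨m, ha⟩ ⟨n, hb⟩
    exact ⟨max m n, (hI _).sup_mem (hmono (le_max_left m n) ha) (hmono (le_max_right m n) hb)⟩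
  lower := fun _ _ ⟨n, ha⟩ h => ⟨n, (hI n).lower ha h⟩

end IsIdeal

theorem subset_oplus_left {I J : Set X} (hJ : ⊥ ∈ J) : I ⊆ oplus I J :=
  fun a ha => ⟨a, ha, ⊥, hJ, (sup_bot_eq a).symm⟩

theorem subset_oplus_right {I J : Set X} (hI : ⊥ ∈ I) : J ⊆ oplus I J :=
  fun b hb => ⟨⊥, hI, b, hb, (bot_sup_eq b).symm⟩

theorem bot_mem_regSet : (⊥ : X) ∈ regSet θ :=
  fun _ hb hne => absurd (le_bot_iff.mp hb) hne

theorem isIdeal_regSet (hθ : ∀ α : L, IsBoolAction (θ α)) : IsIdeal (regSet θ) where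
  nonempty := ⟨⊥, bot_mem_regSet⟩
  lower := fun _ _ ha h c hc => ha c (hc.trans h)
  sup_mem := by
    intro a b ha hb c hc hne
    have hsplit : c = c ⊓ a ⊔ c ⊓ b := by rw [← inf_sup_left, inf_eq_left.mpr hc]
    have hca : IsRegularElem θ (c ⊓ a) := fun d hd => ha d (hd.trans inf_le_right)
    have hcb : IsRegularElem θ (c ⊓ b) := fun d hd => hb d (hd.trans inf_le_right)
    rw [hsplit, delta_sup hθ]
    refine ⟨(hca.finite_delta hθ).union (hcb.finite_delta hθ), ?_⟩
    by_cases ha' : c ⊓ a = ⊥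
    · have hb' : c ⊓ b ≠ ⊥ := fun hb' => hne (by rw [hsplit, ha', hb', sup_idem])
      exact (hcb _ le_rfl hb').2.inr
    · exact (hca _ le_rfl ha').2.inl

theorem isIdeal_HA (θ : L → X → X) (A : X) : IsIdeal (HA θ A) where
  nonempty := ⟨⊥, ∅, bot_le⟩
  sup_mem := by
    classical
    rintro a b ⟨F, hF⟩ ⟨G, hG⟩
    exact ⟨F ∪ G, Finset.sup_union (f := fun β => thetaWord θ β A) ▸ sup_le_sup hF hG⟩
  lower := fun _ _ ⟨F, hF⟩ h => ⟨F, h.trans hF⟩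

theorem self_mem_HA (θ : L → X → X) (A : X) : A ∈ HA θ A :=
  ⟨{[]}, by simp [thetaWord]⟩

theorem hereditary_HA (hθ : ∀ α : L, IsBoolAction (θ α)) (A : X) : Hereditary θ (HA θ A) := by
  classical
  rintro b ⟨F, hF⟩ α
  refine ⟨F.image (· ++ [α]), ((hθ α).monotone hF).trans_eq ?_⟩
  rw [Finset.apply_sup_eq_sup_comp _ (hθ α).map_sup (hθ α).map_bot, Finset.sup_image]
  simp only [Function.comp_def, thetaWord_concat]

def saturationAt (θ : L → X → X) (H : Set X) (n : ℕ) : Set X :=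
  {b | (∀ β : List L, β.length = n → thetaWord θ β b ∈ H) ∧
    ∀ γ : List L, γ.length < n → thetaWord θ γ b ∈ oplus H (regSet θ)}

def saturation (θ : L → X → X) (H : Set X) : Set X := {b | ∃ n, b ∈ saturationAt θ H n}

theorem SHA_eq_saturation (θ : L → X → X) (A : X) : SHA θ A = saturation θ (HA θ A) := rfl

section Saturation

variable {H : Set X}

theorem saturationAt_zero : saturationAt θ H 0 = H := by
  ext b
  simp [saturationAt, List.length_eq_zero_iff, thetaWord]

theorem saturationAt_succ (n : ℕ) :
    saturationAt θ H (n + 1) = oplus H (regSet θ) ∩ {b | ∀ α, θ α b ∈ saturationAt θ H n} := by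
  ext b
  constructor
  · rintro ⟨hH, hJ⟩
    exact ⟨hJ [] n.succ_pos, fun α => ⟨fun β hβ => hH (α :: β) (by simp [hβ]),
      fun γ hγ => hJ (α :: γ) (by simpa using hγ)⟩⟩
  · rintro ⟨hb, hθb⟩
    refine ⟨fun β hβ => ?_, fun γ hγ => ?_⟩
    · obtain _ | ⟨α, β⟩ := β
      · simp at hβ
      · exact (hθb α).1 β (by simpa using hβ)
    · obtain _ | ⟨α, γ⟩ := γ
      · exact hb
      · exact (hθb α).2 γ (by simpa using hγ)

theorem monotone_saturationAt (hH : Hereditary θ H) : Monotone (saturationAt θ H) := by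
  refine monotone_nat_of_le_succ fun n => ?_
  induction n with
  | zero =>
    rw [saturationAt_zero, saturationAt_succ, saturationAt_zero]
    exact fun b hb => ⟨subset_oplus_left bot_mem_regSet hb, fun α => hH b hb α⟩
  | succ n ih =>
    rw [saturationAt_succ n, saturationAt_succ (n + 1)]
    exact Set.inter_subset_inter_right _ fun b hb α => ih (hb α)

theorem isIdeal_saturationAt (hθ : ∀ α : L, IsBoolAction (θ α)) (hH : IsIdeal H) :
    ∀ n, IsIdeal (saturationAt θ H n)
  | 0 => by rwa [saturationAt_zero]
  | n + 1 => by
    rw [saturationAt_succ]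
    exact (isIdeal_saturationAt hθ hH n).inter_setOf_forall_map_mem hθ
      (hH.oplus (isIdeal_regSet hθ))

theorem subset_saturation : H ⊆ saturation θ H :=
  fun _ hb => ⟨0, by rwa [saturationAt_zero]⟩

theorem isIdeal_saturation (hθ : ∀ α : L, IsBoolAction (θ α)) (hH : IsIdeal H)
    (hHer : Hereditary θ H) : IsIdeal (saturation θ H) :=
  IsIdeal.setOf_exists_of_monotone (isIdeal_saturationAt hθ hH) (monotone_saturationAt hHer)

theorem hereditary_saturation (hHer : Hereditary θ H) : Hereditary θ (saturation θ H) :=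
  fun b ⟨n, hb⟩ α => by
    have hb' := monotone_saturationAt hHer n.le_succ hb
    rw [saturationAt_succ] at hb'
    exact ⟨n, hb'.2 α⟩

theorem saturated_saturation (hθ : ∀ α : L, IsBoolAction (θ α)) (hH : IsIdeal H)
    (hHer : Hereditary θ H) : Saturated θ (saturation θ H) := by
  intro a ha hsat
  choose! n hn using hsat
  obtain ⟨N, hN⟩ := ((ha.finite_delta hθ).image n).bddAbove
  refine ⟨N + 1, ?_⟩
  rw [saturationAt_succ]
  refine ⟨subset_oplus_right hH.bot_mem ha, fun α => ?_⟩
  by_cases hα : α ∈ Delta θ a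
  · exact monotone_saturationAt hHer (hN ⟨α, hα, rfl⟩) (hn α hα)
  · rw [show θ α a = ⊥ from of_not_not hα]
    exact (isIdeal_saturationAt hθ hH N).bot_mem

end Saturation

end BoolDyn

open BoolDyn

/-- `S(H(A))` is a saturated hereditary ideal of `B` containing `A`. -/
theorem SHA_saturated_hereditary_ideal
    {X L : Type*} [GeneralizedBooleanAlgebra X] (θ : L → X → X)
    (hθ : ∀ α : L, IsBoolAction (θ α)) (A : X) :
    IsIdeal (SHA θ A) ∧ Hereditary θ (SHA θ A) ∧ Saturated θ (SHA θ A) ∧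
      A ∈ SHA θ A := by
  have hH := isIdeal_HA θ A
  have hHer := hereditary_HA hθ A
  rw [SHA_eq_saturation]
  exact ⟨isIdeal_saturation hθ hH hHer, hereditary_saturation hHer,
    saturated_saturation hθ hH hHer, subset_saturation (self_mem_HA θ A)⟩
end

section
/- Let (B, L, θ) be a Boolean dynamical system with B ≠ {∅}. Then (B, L, θ) has a maximal tail. -/
open BoolDyn

/-!
Fix `a₀ ≠ ∅`. By Zorn's lemma there is a saturated hereditary ideal `H` maximal among those
not containing `a₀`, and its complement is the maximal tail. Conditions (T1)–(T5) say exactly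
that `H` is a proper saturated hereditary ideal. For (T6), if all `θ_β(a) ∩ θ_γ(b)` lay in `H`,
then `a` would lie in the saturated hereditary ideal `K(b) ⊇ H` of elements whose orbit meets
the orbit of `b` inside `H`; maximality forces `a₀ ∈ K(b)`, i.e. `b ∈ K(a₀)`, and once more
`a₀ ∈ K(a₀)`, whence `a₀ = a₀ ∩ a₀ ∈ H`.
-/

namespace BoolDyn

variable {X L : Type*}

theorem thetaWord_append (θ : L → X → X) (β γ : List L) (a : X) :
    thetaWord θ (β ++ γ) a = thetaWord θ γ (thetaWord θ β a) :=
  List.foldl_append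

variable [GeneralizedBooleanAlgebra X]

theorem IsBoolAction.id : IsBoolAction (id : X → X) :=
  ⟨rfl, fun _ _ => rfl, fun _ _ => rfl, fun _ _ => rfl⟩

theorem IsBoolAction.comp {f g : X → X} (hf : IsBoolAction f) (hg : IsBoolAction g) :
    IsBoolAction (g ∘ f) :=
  ⟨by simp [hf.1, hg.1], fun a b => by simp [hf.2.1, hg.2.1],
    fun a b => by simp [hf.2.2.1, hg.2.2.1], fun a b => by simp [hf.2.2.2, hg.2.2.2]⟩

theorem IsBoolAction.monotone_s8 {f : X → X} (hf : IsBoolAction f) : Monotone f := fun a b h =>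
  calc f a ≤ f a ⊔ f b := le_sup_left
    _ = f b := by rw [← hf.2.1, sup_eq_right.2 h]

theorem IsIdeal.bot_mem_s8 {I : Set X} (hI : IsIdeal I) : ⊥ ∈ I :=
  let ⟨_, ha⟩ := hI.nonempty
  hI.lower ha bot_le

variable {θ : L → X → X}

theorem isBoolAction_thetaWord (hθ : ∀ α, IsBoolAction (θ α)) (β : List L) :
    IsBoolAction (thetaWord θ β) := by
  induction β with
  | nil => exact IsBoolAction.id
  | cons α β ih => exact (hθ α).comp ih

structure IsSatHerIdeal (θ : L → X → X) (H : Set X) : Prop extends IsIdeal H where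
  hereditary : Hereditary θ H
  saturated : Saturated θ H

theorem IsSatHerIdeal.thetaWord_mem {H : Set X} (hH : IsSatHerIdeal θ H) {a : X} (ha : a ∈ H)
    (β : List L) : thetaWord θ β a ∈ H := by
  induction β generalizing a with
  | nil => exact ha
  | cons α β ih => exact ih (hH.hereditary a ha α)

theorem isSatHerIdeal_singleton_bot (hθ : ∀ α, IsBoolAction (θ α)) :
    IsSatHerIdeal θ ({⊥} : Set X) where
  nonempty := Set.singleton_nonempty ⊥
  sup_mem a b ha hb := by simp_all
  lower a b ha hba := by simp_all
  hereditary a ha α := by simp_all [(hθ α).1]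
  saturated a hreg ha := by
    by_contra hne
    obtain ⟨-, α, hα⟩ := hreg a le_rfl hne
    exact hα (ha α hα)

theorem IsChain.isSatHerIdeal_sUnion {c : Set (Set X)} (hc : IsChain (· ⊆ ·) c)
    (hne : c.Nonempty) (h : ∀ H ∈ c, IsSatHerIdeal θ H) : IsSatHerIdeal θ (⋃₀ c) := by
  have bot_mem_s8 : ⊥ ∈ ⋃₀ c :=
    let ⟨H, hH⟩ := hne
    ⟨H, hH, (h H hH).bot_mem_s8⟩
  refine ⟨⟨⟨⊥, bot_mem_s8⟩, ?_, ?_⟩, ?_, ?_⟩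
  · rintro a b ⟨M, hM, haM⟩ ⟨N, hN, hbN⟩
    rcases hc.total hM hN with hMN | hNM
    · exact ⟨N, hN, (h N hN).sup_mem (hMN haM) hbN⟩
    · exact ⟨M, hM, (h M hM).sup_mem haM (hNM hbN)⟩
  · rintro a b ⟨M, hM, haM⟩ hba
    exact ⟨M, hM, (h M hM).lower haM hba⟩
  · rintro a ⟨M, hM, haM⟩ α
    exact ⟨M, hM, (h M hM).hereditary a haM α⟩
  · intro a hreg ha
    obtain rfl | hane := eq_or_ne a ⊥
    · exact bot_mem_s8
    -- only the finitely many `θ_α(a)`, `α ∈ Δ_a`, have to be caught by a single member of `c`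
    obtain ⟨M, hM, hsub⟩ := hc.directedOn.exists_mem_subset_of_finite_of_subset_sUnion hne
      ((hreg a le_rfl hane).1.image fun α => θ α a) (Set.image_subset_iff.2 ha)
    exact ⟨M, hM, (h M hM).saturated a hreg fun α hα => hsub ⟨α, hα, rfl⟩⟩

theorem exists_maximal_isSatHerIdeal_notMem (hθ : ∀ α, IsBoolAction (θ α)) {a : X}
    (ha : a ≠ ⊥) : ∃ H, Maximal (fun H => IsSatHerIdeal θ H ∧ a ∉ H) H := by
  obtain ⟨H, -, hH⟩ := zorn_subset_nonempty {H | IsSatHerIdeal θ H ∧ a ∉ H}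
    (fun c hcS hc hne => ⟨⋃₀ c, ⟨hc.isSatHerIdeal_sUnion hne fun H hH => (hcS hH).1,
      fun ⟨H, hH, haH⟩ => (hcS hH).2 haH⟩, fun _ => Set.subset_sUnion_of_mem⟩)
    {⊥} ⟨isSatHerIdeal_singleton_bot hθ, Set.mem_singleton_iff.not.2 ha⟩
  exact ⟨H, hH⟩

def orbitAnnihilator (θ : L → X → X) (H : Set X) (b : X) : Set X :=
  {c | ∀ δ γ : List L, thetaWord θ δ c ⊓ thetaWord θ γ b ∈ H}

theorem mem_orbitAnnihilator_comm {H : Set X} {b c : X} :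
    c ∈ orbitAnnihilator θ H b ↔ b ∈ orbitAnnihilator θ H c :=
  ⟨fun h δ γ => by rw [inf_comm]; exact h γ δ, fun h δ γ => by rw [inf_comm]; exact h γ δ⟩

theorem mem_of_mem_orbitAnnihilator_self {H : Set X} {a : X}
    (h : a ∈ orbitAnnihilator θ H a) : a ∈ H := by
  simpa [thetaWord] using h [] []

theorem IsSatHerIdeal.subset_orbitAnnihilator {H : Set X} (hH : IsSatHerIdeal θ H) (b : X) :
    H ⊆ orbitAnnihilator θ H b :=
  fun _ hc δ _ => hH.lower (hH.thetaWord_mem hc δ) inf_le_left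

theorem isSatHerIdeal_orbitAnnihilator (hθ : ∀ α, IsBoolAction (θ α)) {H : Set X}
    (hH : IsSatHerIdeal θ H) (b : X) : IsSatHerIdeal θ (orbitAnnihilator θ H b) := by
  have bot_mem_s8 : ⊥ ∈ orbitAnnihilator θ H b := hH.subset_orbitAnnihilator b hH.bot_mem_s8
  refine ⟨⟨⟨⊥, bot_mem_s8⟩, fun c c' hc hc' δ γ => ?_, fun c c' hc hcc' δ γ => ?_⟩,
    fun c hc α δ γ => hc (α :: δ) γ, fun c hreg hc => ?_⟩
  · rw [(isBoolAction_thetaWord hθ δ).2.1, inf_sup_right]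
    exact hH.sup_mem (hc δ γ) (hc' δ γ)
  · exact hH.lower (hc δ γ) (inf_le_inf_right _ ((isBoolAction_thetaWord hθ δ).monotone_s8 hcc'))
  have hc' : ∀ α, θ α c ∈ orbitAnnihilator θ H b := fun α => by
    by_cases hα : α ∈ Delta θ c
    · exact hc α hα
    · rwa [not_not.1 hα]
  rintro (_ | ⟨α, δ⟩) γ
  · refine hH.saturated _ (fun d hd => hreg d (hd.trans inf_le_left)) fun α _ => ?_
    have h := hc' α [] (γ ++ [α])
    rw [thetaWord_append] at h
    rw [(hθ α).2.2.1]
    exact h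
  · exact hc' α δ γ

theorem exists_inf_notMem_of_maximal (hθ : ∀ α, IsBoolAction (θ α)) {a₀ : X} {H : Set X}
    (hH : Maximal (fun H => IsSatHerIdeal θ H ∧ a₀ ∉ H) H) {a b : X} (ha : a ∉ H)
    (hb : b ∉ H) : ∃ β γ : List L, thetaWord θ β a ⊓ thetaWord θ γ b ∉ H := by
  have a₀_mem_of_ge : ∀ K, IsSatHerIdeal θ K → H ⊆ K → ∀ c ∉ H, c ∈ K → a₀ ∈ K :=
    fun K hK hHK c hcH hcK => by_contra fun ha₀K => hcH (hH.2 ⟨hK, ha₀K⟩ hHK hcK)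
  have ann := isSatHerIdeal_orbitAnnihilator hθ hH.1.1
  have sub := hH.1.1.subset_orbitAnnihilator
  by_contra! hab
  have ha₀b : b ∈ orbitAnnihilator θ H a₀ :=
    mem_orbitAnnihilator_comm.1 (a₀_mem_of_ge _ (ann b) (sub b) a ha hab)
  exact hH.1.2 (mem_of_mem_orbitAnnihilator_self (a₀_mem_of_ge _ (ann a₀) (sub a₀) b hb ha₀b))

theorem maximalTail_compl_of_maximal (hθ : ∀ α, IsBoolAction (θ α)) {a₀ : X} {H : Set X}
    (hH : Maximal (fun H => IsSatHerIdeal θ H ∧ a₀ ∉ H) H) : MaximalTail θ Hᶜ where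
  nonempty := ⟨a₀, hH.1.2⟩
  not_bot_mem := not_not.2 hH.1.1.bot_mem_s8
  t2 a α h ha := h (hH.1.1.hereditary a ha α)
  t3 a b hab := by
    by_contra! h
    exact hab (hH.1.1.sup_mem (not_not.1 h.1) (not_not.1 h.2))
  t4 a b ha hab hb := ha (hH.1.1.lower hb hab)
  t5 a ha hreg := by
    by_contra! h
    exact ha (hH.1.1.saturated a hreg fun α _ => not_not.1 (h α))
  t6 a b ha hb := exists_inf_notMem_of_maximal hθ hH ha hb

end BoolDyn

/-- **Statement 11.** A Boolean dynamical system with `B ≠ {∅}` has a maximal tail. -/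
theorem exists_maximalTail
    {X L : Type*} [GeneralizedBooleanAlgebra X] (θ : L → X → X)
    (hθ : ∀ α : L, IsBoolAction (θ α))
    (hX : ∃ a : X, a ≠ ⊥) :
    ∃ T : Set X, MaximalTail θ T := by
  obtain ⟨a₀, ha₀⟩ := hX
  obtain ⟨H, hH⟩ := exists_maximal_isSatHerIdeal_notMem hθ ha₀
  exact ⟨Hᶜ, maximalTail_compl_of_maximal hθ hH⟩
end

section
/- Let (B, L, θ) be a minimal Boolean dynamical system with B ≠ {∅}. Then B ∖ {∅} is a maximal tail of (B, L, θ), and every maximal tail of (B, L, θ) equals B ∖ {∅}. -/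
open BoolDyn


section Aux

variable {X L : Type*} [GeneralizedBooleanAlgebra X] (θ : L → X → X)

lemma theta_mono (hθ : ∀ α : L, IsBoolAction (θ α)) (α : L) {a b : X} (h : a ≤ b) :
    θ α a ≤ θ α b := by
  calc θ α a ≤ θ α a ⊔ θ α b := le_sup_left
    _ = θ α (a ⊔ b) := ((hθ α).2.1 a b).symm
    _ = θ α b := by rw [sup_eq_right.mpr h]

lemma thetaWord_nil (a : X) : thetaWord θ [] a = a := rfl

lemma thetaWord_cons (α : L) (γ : List L) (a : X) :
    thetaWord θ (α :: γ) a = thetaWord θ γ (θ α a) := rfl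

lemma thetaWord_bot (hθ : ∀ α : L, IsBoolAction (θ α)) (γ : List L) :
    thetaWord θ γ ⊥ = ⊥ := by
  induction γ with
  | nil => rfl
  | cons α γ ih => rw [thetaWord_cons, (hθ α).1, ih]

lemma thetaWord_mono (hθ : ∀ α : L, IsBoolAction (θ α)) (γ : List L) {a b : X} (h : a ≤ b) :
    thetaWord θ γ a ≤ thetaWord θ γ b := by
  induction γ generalizing a b with
  | nil => exact h
  | cons α γ ih => exact ih (theta_mono θ hθ α h)

lemma thetaWord_sup (hθ : ∀ α : L, IsBoolAction (θ α)) (γ : List L) (a b : X) :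
    thetaWord θ γ (a ⊔ b) = thetaWord θ γ a ⊔ thetaWord θ γ b := by
  induction γ generalizing a b with
  | nil => rfl
  | cons α γ ih => rw [thetaWord_cons, (hθ α).2.1, ih, thetaWord_cons, thetaWord_cons]

/-- The key consequence of minimality: any two nonzero elements can be "connected". -/
lemma minimal_key (hθ : ∀ α : L, IsBoolAction (θ α)) (hmin : Minimal θ)
    {a b : X} (ha : a ≠ ⊥) (hb : b ≠ ⊥) :
    ∃ β γ : List L, thetaWord θ β a ⊓ thetaWord θ γ b ≠ ⊥ := by
  set H : Set X := {c | ∀ γ : List L, ∀ d : X, d ≤ thetaWord θ γ c → d ≠ ⊥ →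
      ∃ β γ' : List L, thetaWord θ β a ⊓ thetaWord θ γ' d ≠ ⊥} with hH
  have hbotH : (⊥ : X) ∈ H := by
    intro γ d hd hdne
    rw [thetaWord_bot θ hθ] at hd
    exact absurd (le_bot_iff.mp hd) hdne
  -- monotone lifting of the conclusion
  have lift : ∀ {d d' : X}, d' ≤ d →
      (∃ β γ' : List L, thetaWord θ β a ⊓ thetaWord θ γ' d' ≠ ⊥) →
      ∃ β γ' : List L, thetaWord θ β a ⊓ thetaWord θ γ' d ≠ ⊥ := by
    rintro d d' hle ⟨β, γ', hne⟩
    refine ⟨β, γ', fun h0 => hne ?_⟩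
    have : thetaWord θ β a ⊓ thetaWord θ γ' d' ≤ thetaWord θ β a ⊓ thetaWord θ γ' d :=
      inf_le_inf_left _ (thetaWord_mono θ hθ γ' hle)
    exact le_bot_iff.mp (h0 ▸ this)
  have hIdeal : IsIdeal H := by
    refine ⟨⟨⊥, hbotH⟩, ?_, ?_⟩
    · intro c₁ c₂ h₁ h₂ γ d hd hdne
      rw [thetaWord_sup θ hθ] at hd
      rcases eq_or_ne (d ⊓ thetaWord θ γ c₁) ⊥ with h0 | h0
      · have hd2 : d \ thetaWord θ γ c₁ ≤ thetaWord θ γ c₂ := sdiff_le_iff.mpr hd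
        have hne2 : d \ thetaWord θ γ c₁ ≠ ⊥ := by
          intro h0'
          apply hdne
          have := sup_inf_sdiff d (thetaWord θ γ c₁)
          rw [h0, h0', sup_idem] at this
          exact this.symm
        exact lift sdiff_le (h₂ γ _ hd2 hne2)
      · exact lift inf_le_left (h₁ γ _ inf_le_right h0)
    · intro c₁ c₂ h₁ hle γ d hd hdne
      exact h₁ γ d (hd.trans (thetaWord_mono θ hθ γ hle)) hdne
  have hHer : Hereditary θ H := by
    intro c hc α γ d hd hdne
    exact hc (α :: γ) d hd hdne
  have hSat : Saturated θ H := by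
    intro c hreg hsub γ d hd hdne
    match γ with
    | [] =>
      -- d ≤ c, d ≠ ⊥; d inherits regularity, so Δ_d is nonempty
      obtain ⟨-, α, hα⟩ := hreg d hd hdne
      have hαc : α ∈ Delta θ c := fun h0 => hα (le_bot_iff.mp (h0 ▸ theta_mono θ hθ α hd))
      obtain ⟨β, γ', hne⟩ := hsub α hαc [] (θ α d) (theta_mono θ hθ α hd) hα
      exact ⟨β, α :: γ', hne⟩
    | α :: γ₁ =>
      rw [thetaWord_cons] at hd
      rcases eq_or_ne (θ α c) ⊥ with h0 | h0
      · rw [h0, thetaWord_bot θ hθ] at hd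
        exact absurd (le_bot_iff.mp hd) hdne
      · exact hsub α h0 γ₁ d hd hdne
  have haH : a ∈ H := by
    intro γ d hd hdne
    refine ⟨γ, [], ?_⟩
    rw [thetaWord_nil, inf_eq_right.mpr hd]
    exact hdne
  rcases hmin H hIdeal hHer hSat with h | h
  · rw [h] at haH
    exact absurd haH ha
  · have hbH : b ∈ H := h ▸ Set.mem_univ b
    obtain ⟨β, γ', hne⟩ := hbH [] b le_rfl hb
    exact ⟨β, γ', hne⟩

end Aux

/-- **Statement 13.** If `(B, L, θ)` is minimal and `B ≠ {∅}`, then `B ∖ {∅}` is a maximal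
tail, and every maximal tail equals `B ∖ {∅}`. -/
theorem minimal_unique_maximalTail
    {X L : Type*} [GeneralizedBooleanAlgebra X] (θ : L → X → X)
    (hθ : ∀ α : L, IsBoolAction (θ α))
    (hmin : Minimal θ) (hX : ∃ a : X, a ≠ ⊥) :
    MaximalTail θ {a : X | a ≠ ⊥} ∧
      ∀ T : Set X, MaximalTail θ T → T = {a : X | a ≠ ⊥} := by
  constructor
  · refine ⟨hX, by simp, ?_, ?_, ?_, ?_, ?_⟩
    · -- t2
      intro a α ha h0
      rw [h0, (hθ α).1] at ha
      exact ha rfl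
    · -- t3
      intro a b hab
      by_contra h
      push_neg at h
      obtain ⟨ha, hb⟩ := h
      simp only [Set.mem_setOf_eq, not_not] at ha hb
      rw [ha, hb, sup_idem] at hab
      exact hab rfl
    · -- t4
      intro a b ha hle h0
      exact ha (le_bot_iff.mp (h0 ▸ hle))
    · -- t5
      intro a ha hreg
      obtain ⟨-, α, hα⟩ := hreg a le_rfl ha
      exact ⟨α, hα⟩
    · -- t6
      intro a b ha hb
      exact minimal_key θ hθ hmin ha hb
  · intro T hT
    set C : Set X := {x | x ∉ T} with hC
    have hbotC : (⊥ : X) ∈ C := hT.not_bot_mem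
    have hIdeal : IsIdeal C := by
      refine ⟨⟨⊥, hbotC⟩, ?_, ?_⟩
      · intro a b ha hb hab
        rcases hT.t3 a b hab with h | h
        exacts [ha h, hb h]
      · intro a b ha hle hb
        exact ha (hT.t4 b a hb hle)
    have hHer : Hereditary θ C := by
      intro a ha α haα
      exact ha (hT.t2 a α haα)
    have hSat : Saturated θ C := by
      intro a hreg hsub ha
      obtain ⟨α, hα⟩ := hT.t5 a ha hreg
      have hαne : θ α a ≠ ⊥ := fun h0 => hT.not_bot_mem (h0 ▸ hα)
      exact hsub α hαne hα
    rcases hmin C hIdeal hHer hSat with h | h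
    · ext x
      simp only [Set.mem_setOf_eq]
      constructor
      · intro hx h0
        exact hT.not_bot_mem (h0 ▸ hx)
      · intro hx
        by_contra hxT
        have : x ∈ C := hxT
        rw [h] at this
        exact hx this
    · exfalso
      obtain ⟨t, ht⟩ := hT.nonempty
      have : t ∈ C := h ▸ Set.mem_univ t
      exact this ht
end

section
/- Let (B, L, θ) be a Boolean dynamical system such that S(H(A)) = B for every nonempty A ∈ B. Then for all A, B ∈ B with A ≠ ∅ and every x ∈ L^∞, there exist C ∈ B_reg such that B ∖ C ∈ H(A), and n ∈ ℕ₀ such that θ_{x_{1,n}}(B) ∈ H(A). -/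
open BoolDyn


/-- **Statement 15.** If `S(H(A)) = B` for every nonempty `A`, then for all `A ≠ ∅`, all `b`
and every `x ∈ L^∞` there are `C ∈ B_reg` with `b ∖ C ∈ H(A)` and `n ∈ ℕ₀` with
`θ_{x_{1,n}}(b) ∈ H(A)`. -/
theorem of_SHA_eq_univ
    {X L : Type*} [GeneralizedBooleanAlgebra X] (θ : L → X → X)
    (hθ : ∀ α : L, IsBoolAction (θ α))
    (h : ∀ A : X, A ≠ ⊥ → SHA θ A = Set.univ) :
    ∀ A b : X, A ≠ ⊥ → ∀ x : ℕ → L,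
      (∃ C ∈ regSet θ, b \ C ∈ HA θ A) ∧
        ∃ n : ℕ, thetaWord θ ((List.range n).map x) b ∈ HA θ A := by
  intro A b hA x
  have hb : b ∈ SHA θ A := by rw [h A hA]; trivial
  obtain ⟨n, hn, hlt⟩ := hb
  constructor
  · rcases Nat.eq_zero_or_pos n with hn0 | hn0
    · refine ⟨⊥, ?_, ?_⟩
      · intro c hc hne; exact absurd (le_bot_iff.mp hc) hne
      · have := hn [] (by simp [hn0])
        simp only [thetaWord, List.foldl_nil] at this
        obtain ⟨F, hF⟩ := this
        exact ⟨F, le_trans (sdiff_le) hF⟩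
    · have := hlt [] (by simpa using hn0)
      simp only [thetaWord, List.foldl_nil] at this
      obtain ⟨a, ha, c, hc, hbc⟩ := this
      refine ⟨c, hc, ?_⟩
      obtain ⟨F, hF⟩ := ha
      refine ⟨F, le_trans ?_ hF⟩
      rw [sdiff_le_iff, hbc, sup_comm]
  · exact ⟨n, hn _ (by simp)⟩
end
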